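/- Let W be a graphon whose degree function equals p almost everywhere. Then every forest F (graph with no cycles) satisfies t(F, W) = p^{|E(F)|}. -/

import Mathlib

open MeasureTheory Finset

/-- Lebesgue measure restricted to `[0,1]`. -/
noncomputable def μ01 : Measure ℝ := volume.restrict (Set.Icc 0 1)

/-- Product measure on `V → ℝ`, each coordinate uniform on `[0,1]`. -/
noncomputable def πμ (V : Type*) [Fintype V] : Measure (V → ℝ) :=
  Measure.pi fun _ => μ01

/-- `W` is a graphon: symmetric, measurable, with values in `[0,1]`. -/
def IsGraphon (W : ℝ → ℝ → ℝ) : Prop :=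
  Measurable (Function.uncurry W) ∧ (∀ x y, W x y = W y x) ∧
    ∀ x y, W x y ∈ Set.Icc (0 : ℝ) 1

/-- Value of `W` on an unordered pair of vertices (for symmetric `W` this is
just `W (x i) (x j)` on the edge `{i, j}`). -/
noncomputable def edgeVal (W : ℝ → ℝ → ℝ) {V : Type*} (x : V → ℝ) : Sym2 V → ℝ :=
  Sym2.lift ⟨fun i j => (W (x i) (x j) + W (x j) (x i)) / 2,
    fun i j => by simp [add_comm]⟩

/-- `∏_{{i,j} ∈ s} W(x_i, x_j)` for a finite set `s` of unordered pairs. -/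
noncomputable def prodEdges (W : ℝ → ℝ → ℝ) {V : Type*} (s : Finset (Sym2 V))
    (x : V → ℝ) : ℝ :=
  ∏ e ∈ s, edgeVal W x e

/-- Homomorphism density of the graph on `V` with edge set `s` in `W`. -/
noncomputable def homDensitySet {V : Type*} [Fintype V] (s : Finset (Sym2 V))
    (W : ℝ → ℝ → ℝ) : ℝ :=
  ∫ x : V → ℝ, prodEdges W s x ∂(πμ V)

/-- Homomorphism density `t(F, W)`. -/
noncomputable def homDensity {V : Type*} [Fintype V] (F : SimpleGraph V)
    [Fintype F.edgeSet] (W : ℝ → ℝ → ℝ) : ℝ :=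
  homDensitySet F.edgeFinset W

/-- `𝔾(G, W)(F)`: the probability that sampling along `G` from `W` yields the
edge-subgraph of `G` with edge set `s`. -/
noncomputable def sampleProb {V : Type*} [Fintype V] [DecidableEq V]
    (G : SimpleGraph V) [Fintype G.edgeSet] (W : ℝ → ℝ → ℝ)
    (s : Finset (Sym2 V)) : ℝ :=
  ∫ x : V → ℝ,
    (∏ e ∈ s, edgeVal W x e) * ∏ e ∈ G.edgeFinset \ s, (1 - edgeVal W x e) ∂(πμ V)

/-- `ℕ(G, W)(k)`: probability that the `W`-sample along `G` has exactly `k` edges. -/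
noncomputable def edgeCountDist {V : Type*} [Fintype V] [DecidableEq V]
    (G : SimpleGraph V) [Fintype G.edgeSet] (W : ℝ → ℝ → ℝ) (k : ℕ) : ℝ :=
  ∑ s ∈ G.edgeFinset.powerset.filter (fun s => s.card = k), sampleProb G W s

/-- `E[t(G_k, W)]` where `G_k` is a uniformly random `k`-edge subgraph of `G`. -/
noncomputable def avgSubDensity {V : Type*} [Fintype V] [DecidableEq V]
    (G : SimpleGraph V) [Fintype G.edgeSet] (W : ℝ → ℝ → ℝ) (k : ℕ) : ℝ :=
  ((G.edgeFinset.card.choose k : ℝ))⁻¹ *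
    ∑ s ∈ G.edgeFinset.powerset.filter (fun s => s.card = k), homDensitySet s W

/-- `G` contains a `4`-cycle. -/
def ContainsC4 {V : Type*} (G : SimpleGraph V) : Prop :=
  ∃ a b c d : V, a ≠ b ∧ a ≠ c ∧ a ≠ d ∧ b ≠ c ∧ b ≠ d ∧ c ≠ d ∧
    G.Adj a b ∧ G.Adj b c ∧ G.Adj c d ∧ G.Adj d a

open scoped ENNReal

/-! A finite forest with an edge has a leaf `v` hanging from a vertex `a`. Integrating out `x_v`
first turns the factor `W(x_a, x_v)` into the degree of `x_a`, which is `p` for almost every `x_a`;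
so removing a leaf edge divides the density by `p`, and induction on the number of edges gives
`p ^ |E(F)|`. The induction runs on lower Lebesgue integrals, which need no integrability
side conditions. -/

namespace SimpleGraph

theorem IsAcyclic.exists_existsUnique_adj {V : Type*} [Finite V] {G : SimpleGraph V}
    (hG : G.IsAcyclic) {u w : V} (huw : G.Adj u w) : ∃ v, ∃! a, G.Adj v a := by
  classical
  have := Fintype.ofFinite V
  set C := G.connectedComponentMk u
  have hu : u ∈ C := rfl
  have hw : w ∈ C := C.mem_supp_of_adj_mem_supp hu huw
  have : Nontrivial C := ⟨⟨u, hu⟩, ⟨w, hw⟩, by simp [huw.ne]⟩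
  obtain ⟨⟨v, hv⟩, hdeg⟩ := (hG.isTree_connectedComponent C).exists_vert_degree_one_of_nontrivial
  obtain ⟨⟨a, ha⟩, hva, huniq⟩ := degree_eq_one_iff_existsUnique_adj.mp hdeg
  refine ⟨v, a, (C.toSimpleGraph_adj hv ha).mp hva, fun b hvb => ?_⟩
  have hb : b ∈ C := C.mem_supp_of_adj_mem_supp hv hvb
  exact congrArg Subtype.val (huniq ⟨b, hb⟩ ((C.toSimpleGraph_adj hv hb).mpr hvb))

theorem IsAcyclic.exists_leaf_mem_of_subset {V : Type*} [Finite V] [DecidableEq V]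
    {G : SimpleGraph V} (hG : G.IsAcyclic) {s : Finset (Sym2 V)} (hs : ↑s ⊆ G.edgeSet)
    (hne : s.Nonempty) : ∃ a v, a ≠ v ∧ s(a, v) ∈ s ∧ ∀ e ∈ s.erase s(a, v), v ∉ e := by
  set H := fromEdgeSet (s : Set (Sym2 V))
  have hH : H.IsAcyclic := hG.anti fun x y hxy => hs hxy.1
  have hHadj {x y : V} (h : s(x, y) ∈ s) : H.Adj x y :=
    (fromEdgeSet_adj _).mpr ⟨h, G.ne_of_adj (hs h)⟩
  obtain ⟨⟨u, w⟩, he⟩ := hne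
  obtain ⟨v, a, hva, huniq⟩ := hH.exists_existsUnique_adj (hHadj he)
  refine ⟨a, v, hva.ne.symm, Sym2.eq_swap ▸ hva.1, fun e he hve => ?_⟩
  obtain ⟨hne, hes⟩ := mem_erase.mp he
  obtain ⟨b, rfl⟩ := Sym2.mem_iff_exists.mp hve
  exact hne (huniq b (hHadj hes) ▸ Sym2.eq_swap)

end SimpleGraph

theorem MeasureTheory.lintegral_pi_eq_lintegral_lintegral_update {ι : Type*} [Fintype ι]
    [DecidableEq ι] {X : ι → Type*} [∀ i, MeasurableSpace (X i)] (μ : ∀ i, Measure (X i))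
    [∀ i, IsProbabilityMeasure (μ i)] {f : (∀ i, X i) → ℝ≥0∞} (hf : Measurable f) (i : ι) :
    ∫⁻ x, f x ∂Measure.pi μ = ∫⁻ x, ∫⁻ t, f (Function.update x i t) ∂μ i ∂Measure.pi μ := by
  have hg : Measurable fun x => ∫⁻ t, f (Function.update x i t) ∂μ i := by
    simpa only [lmarginal_singleton] using hf.lmarginal (s := {i}) μ
  refine lintegral_eq_of_lmarginal_eq {i} hf hg ?_
  ext x
  rw [lmarginal_singleton, lmarginal_singleton]
  simp only [Function.update_idem, lintegral_const, measure_univ, mul_one]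

instance : IsProbabilityMeasure μ01 :=
  ⟨by simp [μ01, Real.volume_Icc]⟩

section EdgeProducts

variable {V : Type*} {W : ℝ → ℝ → ℝ}

theorem edgeVal_mk (W : ℝ → ℝ → ℝ) (x : V → ℝ) (i j : V) :
    edgeVal W x s(i, j) = (W (x i) (x j) + W (x j) (x i)) / 2 := rfl

theorem edgeVal_update_of_notMem [DecidableEq V] (W : ℝ → ℝ → ℝ) (x : V → ℝ) {v : V} (t : ℝ)
    {e : Sym2 V} (he : v ∉ e) : edgeVal W (Function.update x v t) e = edgeVal W x e := by
  induction e using Sym2.ind with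
  | _ i j =>
    obtain ⟨hvi, hvj⟩ : v ≠ i ∧ v ≠ j := by simpa [not_or] using he
    rw [edgeVal_mk, edgeVal_mk, Function.update_of_ne hvi.symm, Function.update_of_ne hvj.symm]

theorem measurable_edgeVal (hW : Measurable (Function.uncurry W)) (e : Sym2 V) :
    Measurable fun x : V → ℝ => edgeVal W x e := by
  induction e using Sym2.ind with
  | _ i j =>
    have hij := hW.comp (f := fun x : V → ℝ => (x i, x j)) (by fun_prop)
    have hji := hW.comp (f := fun x : V → ℝ => (x j, x i)) (by fun_prop)
    exact (hij.add hji).div_const 2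

theorem measurable_prodEdges (hW : Measurable (Function.uncurry W)) (s : Finset (Sym2 V)) :
    Measurable (prodEdges W s) :=
  Finset.measurable_prod _ fun e _ => measurable_edgeVal hW e

theorem prodEdges_nonneg (hW : ∀ x y, 0 ≤ W x y) (s : Finset (Sym2 V)) (x : V → ℝ) :
    0 ≤ prodEdges W s x := by
  refine Finset.prod_nonneg fun e _ => ?_
  induction e using Sym2.ind with
  | _ i j => rw [edgeVal_mk]; linarith [hW (x i) (x j), hW (x j) (x i)]

theorem prodEdges_insert_update [DecidableEq V] (hW : ∀ x y, W x y = W y x)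
    {s : Finset (Sym2 V)} {a v : V} (hav : a ≠ v) (hv : ∀ e ∈ s, v ∉ e) (x : V → ℝ) (t : ℝ) :
    prodEdges W (insert s(a, v) s) (Function.update x v t) = W (x a) t * prodEdges W s x := by
  have hleaf : s(a, v) ∉ s := fun h => hv _ h (Sym2.mem_mk_right a v)
  rw [prodEdges, prod_insert hleaf, edgeVal_mk, Function.update_of_ne hav, Function.update_self,
    hW t, add_self_div_two]
  congr 1
  exact prod_congr rfl fun e he => edgeVal_update_of_notMem W x t (hv e he)

end EdgeProducts

namespace IsGraphon

variable {W : ℝ → ℝ → ℝ} {p : ℝ}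

theorem integrable_section (hW : IsGraphon W) (r : ℝ) : Integrable (W r) μ01 :=
  Integrable.of_bound (hW.1.comp (measurable_const.prodMk measurable_id)).aestronglyMeasurable 1
    (Filter.Eventually.of_forall fun t => by
      rw [Real.norm_eq_abs, abs_of_nonneg (hW.2.2 r t).1]; exact (hW.2.2 r t).2)

theorem ae_lintegral_ofReal_eq (hW : IsGraphon W) (hdeg : ∀ᵐ x ∂μ01, (∫ y, W x y ∂μ01) = p) :
    ∀ᵐ r ∂μ01, ∫⁻ t, ENNReal.ofReal (W r t) ∂μ01 = ENNReal.ofReal p := by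
  filter_upwards [hdeg] with r hr
  rw [← ofReal_integral_eq_lintegral_ofReal (hW.integrable_section r)
    (Filter.Eventually.of_forall fun t => (hW.2.2 r t).1), hr]

theorem degree_nonneg (hW : IsGraphon W) (hdeg : ∀ᵐ x ∂μ01, (∫ y, W x y ∂μ01) = p) : 0 ≤ p := by
  obtain ⟨r, hr⟩ := hdeg.exists
  exact hr ▸ integral_nonneg fun t => (hW.2.2 r t).1

theorem lintegral_prodEdges_insert_leaf {V : Type*} [Fintype V] [DecidableEq V]
    (hW : IsGraphon W) (hdeg : ∀ᵐ x ∂μ01, (∫ y, W x y ∂μ01) = p)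
    {s : Finset (Sym2 V)} {a v : V} (hav : a ≠ v) (hv : ∀ e ∈ s, v ∉ e) :
    ∫⁻ x, ENNReal.ofReal (prodEdges W (insert s(a, v) s) x) ∂πμ V =
      ENNReal.ofReal p * ∫⁻ x, ENNReal.ofReal (prodEdges W s x) ∂πμ V := by
  have hmeas := (measurable_prodEdges hW.1 s).ennreal_ofReal
  have hsec (r : ℝ) : Measurable fun t => ENNReal.ofReal (W r t) :=
    (hW.1.comp (f := fun t => (r, t)) (by fun_prop)).ennreal_ofReal
  have hdeg' : ∀ᵐ x ∂πμ V, ∫⁻ t, ENNReal.ofReal (W (x a) t) ∂μ01 = ENNReal.ofReal p :=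
    (Measure.tendsto_eval_ae_ae (μ := fun _ => μ01) (i := a)).eventually
      (hW.ae_lintegral_ofReal_eq hdeg)
  calc ∫⁻ x, ENNReal.ofReal (prodEdges W (insert s(a, v) s) x) ∂πμ V
      = ∫⁻ x, ∫⁻ t, ENNReal.ofReal (W (x a) t) * ENNReal.ofReal (prodEdges W s x) ∂μ01 ∂πμ V := by
        rw [πμ, lintegral_pi_eq_lintegral_lintegral_update _
          (measurable_prodEdges hW.1 _).ennreal_ofReal v]
        simp only [prodEdges_insert_update hW.2.1 hav hv, ENNReal.ofReal_mul (hW.2.2 _ _).1]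
    _ = ∫⁻ x, ENNReal.ofReal p * ENNReal.ofReal (prodEdges W s x) ∂πμ V := by
        refine lintegral_congr_ae ?_
        filter_upwards [hdeg'] with x hx
        rw [lintegral_mul_const _ (hsec _), hx]
    _ = ENNReal.ofReal p * ∫⁻ x, ENNReal.ofReal (prodEdges W s x) ∂πμ V :=
        lintegral_const_mul _ hmeas

theorem lintegral_prodEdges_of_subset_isAcyclic {V : Type*} [Fintype V] [DecidableEq V]
    (hW : IsGraphon W) (hdeg : ∀ᵐ x ∂μ01, (∫ y, W x y ∂μ01) = p)
    {G : SimpleGraph V} (hG : G.IsAcyclic) (s : Finset (Sym2 V)) (hs : ↑s ⊆ G.edgeSet) :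
    ∫⁻ x, ENNReal.ofReal (prodEdges W s x) ∂πμ V = ENNReal.ofReal p ^ s.card := by
  induction s using Finset.strongInduction with
  | H s ih =>
    rcases s.eq_empty_or_nonempty with rfl | hne
    · simp [prodEdges, πμ]
    obtain ⟨a, v, hav, hmem, hleaf⟩ := hG.exists_leaf_mem_of_subset hs hne
    rw [← insert_erase hmem, hW.lintegral_prodEdges_insert_leaf hdeg hav hleaf,
      ih _ (erase_ssubset hmem) (subset_trans (by simp) hs),
      card_insert_of_notMem (notMem_erase _ _), pow_succ', mul_comm]

end IsGraphon

/-- if almost all degrees are `p` then every forest `F`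
satisfies `t(F, W) = p^{|E(F)|}`. -/
theorem stmt8 {V : Type*} [Fintype V] (F : SimpleGraph V) [Fintype F.edgeSet]
    (hF : F.IsAcyclic) (W : ℝ → ℝ → ℝ) (hW : IsGraphon W) (p : ℝ)
    (hdeg : ∀ᵐ x ∂μ01, (∫ y, W x y ∂μ01) = p) :
    homDensity F W = p ^ F.edgeFinset.card := by
  classical
  have hp := hW.degree_nonneg hdeg
  rw [homDensity, homDensitySet, integral_eq_lintegral_of_nonneg_ae
      (Filter.Eventually.of_forall (prodEdges_nonneg (fun x y => (hW.2.2 x y).1) _))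
      (measurable_prodEdges hW.1 _).aestronglyMeasurable,
    hW.lintegral_prodEdges_of_subset_isAcyclic hdeg hF _ (by simp),
    ← ENNReal.ofReal_pow hp, ENNReal.toReal_ofReal (by positivity)]
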